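/- Every finite interval order having a representation by closed real intervals each of length 0 or length 1 has order dimension at most 3. -/

import Mathlib

/-- `L` is a linear extension of the partial order on `α`. -/
def IsLinearExtension {α : Type*} [PartialOrder α] (L : α → α → Prop) : Prop :=
  IsLinearOrder α L ∧ ∀ x y : α, x ≤ y → L x y

/-- The order dimension of `α` is at most `t`. -/
def DimLE (α : Type*) [PartialOrder α] (t : ℕ) : Prop :=
  ∃ L : Fin t → α → α → Prop, (∀ i, IsLinearExtension (L i)) ∧
    ∀ x y : α, x ≤ y ↔ ∀ i, L i x y

/-!
Call `x` a point if `r x = l x` and a unit if `r x = l x + 1`, and say that `x` lies in the band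
`⌊l x⌋`. If `r x < l y`, then the band of `x` is at most that of `y`, and equal to it only if `x`
is a point; incomparable elements lie in equal or adjacent bands.

The first linear extension lists the bands in increasing order, and inside a band first the points
by increasing, then the units by decreasing left endpoint. The other two group the bands
`⌊l x⌋ + p = 2k, 2k + 1` into blocks, for `p = 0` and `p = 1`; inside a block the lower band is
sorted by right endpoints and the upper band by left endpoints, and on ties the units of the upper
band come first, then its points, then the lower band. This puts each `x` of the lower band above
every element of the upper band whose interval meets that of `x`, and inside the upper band it
reverses the first extension on incomparable pairs. Every band is an upper band for one of the
two parities, so each incomparable pair is reversed somewhere. Equal intervals are separated by an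
arbitrary injection `τ` of `α` into a linear order, reversed in the first extension.
-/

open Function

theorem isLinearExtension_onFun {α : Type*} [PartialOrder α] {β : Type*} [LinearOrder β] {K : α → β}
    (hinj : K.Injective) (hK : Monotone K) : IsLinearExtension ((· ≤ ·) on K) :=
  ⟨hinj.isLinearOrder_onFun _, fun _ _ hxy => hK hxy⟩

theorem dimLE_three_of_strictMono {α : Type*} [PartialOrder α] {β₀ β₁ β₂ : Type*} [LinearOrder β₀]
    [LinearOrder β₁] [LinearOrder β₂] {K₀ : α → β₀} {K₁ : α → β₁} {K₂ : α → β₂}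
    (hinj₀ : K₀.Injective) (hinj₁ : K₁.Injective) (hinj₂ : K₂.Injective)
    (hK₀ : StrictMono K₀) (hK₁ : StrictMono K₁) (hK₂ : StrictMono K₂)
    (hrev : ∀ x y, ¬ x ≤ y → ¬ y ≤ x → K₀ y < K₀ x ∨ K₁ y < K₁ x ∨ K₂ y < K₂ x) :
    DimLE α 3 := by
  refine ⟨![(· ≤ ·) on K₀, (· ≤ ·) on K₁, (· ≤ ·) on K₂], ?_, fun x y => ⟨?_, fun h => ?_⟩⟩
  · intro i
    fin_cases i
    exacts [isLinearExtension_onFun hinj₀ hK₀.monotone,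
      isLinearExtension_onFun hinj₁ hK₁.monotone, isLinearExtension_onFun hinj₂ hK₂.monotone]
  · intro hxy i
    fin_cases i
    exacts [hK₀.monotone hxy, hK₁.monotone hxy, hK₂.monotone hxy]
  · have h₀ : K₀ x ≤ K₀ y := h 0
    by_contra hxy
    by_cases hyx : y ≤ x
    · exact h₀.not_gt (hK₀ (hyx.lt_of_not_ge hxy))
    · rcases hrev x y hxy hyx with h' | h' | h'
      exacts [h₀.not_gt h', (h 1 : K₁ x ≤ K₁ y).not_gt h', (h 2 : K₂ x ≤ K₂ y).not_gt h']

section Floor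

variable {R : Type*} [Ring R] [LinearOrder R] [IsStrictOrderedRing R] [FloorRing R] {a b : R}

theorem floor_le_floor_add_one (h : b ≤ a + 1) : ⌊b⌋ ≤ ⌊a⌋ + 1 :=
  Int.floor_add_one a ▸ Int.floor_mono h

theorem floor_lt_floor_of_add_one_le (h : a + 1 ≤ b) : ⌊a⌋ < ⌊b⌋ :=
  Int.lt_iff_add_one_le.2 (Int.floor_add_one a ▸ Int.floor_mono h)

end Floor

section Keys

variable {α γ : Type*} {l r : α → ℝ}

variable (l r) in
noncomputable def bandKey (τ : α → γ) (x : α) : ℤ ×ₗ ℝ ×ₗ ℝ ×ₗ γᵒᵈ :=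
  toLex (⌊l x⌋, toLex (r x - l x,
    toLex (if r x = l x then l x else -l x, OrderDual.toDual (τ x))))

variable (l r) in
noncomputable def blockKey (τ : α → γ) (p : ℤ) (x : α) : ℤ ×ₗ ℝ ×ₗ ℕ ×ₗ γ :=
  toLex ((⌊l x⌋ + p) / 2, toLex (if (⌊l x⌋ + p) % 2 = 0 then r x else l x,
    toLex (if (⌊l x⌋ + p) % 2 = 0 then 2 else if r x = l x then 1 else 0, τ x)))

theorem bandKey_injective {τ : α → γ} (hτ : τ.Injective) : (bandKey l r τ).Injective :=
  fun x y h => hτ <| by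
    simp only [bandKey, toLex_inj, Prod.mk.injEq, OrderDual.toDual_inj] at h
    exact h.2.2.2

theorem blockKey_injective {τ : α → γ} (hτ : τ.Injective) (p : ℤ) :
    (blockKey l r τ p).Injective :=
  fun x y h => hτ <| by
    simp only [blockKey, toLex_inj, Prod.mk.injEq] at h
    exact h.2.2.2

variable [LinearOrder γ]

theorem bandKey_lt_bandKey (hr : ∀ x, r x = l x ∨ r x = l x + 1) (τ : α → γ) {x y : α}
    (hxy : r x < l y) : bandKey l r τ x < bandKey l r τ y := by
  have hband : ⌊l x⌋ ≤ ⌊l y⌋ := Int.floor_mono (by rcases hr x with h | h <;> linarith)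
  simp only [bandKey, Prod.Lex.toLex_lt_toLex]
  rcases hband.lt_or_eq with hlt | heq
  · exact Or.inl hlt
  refine Or.inr ⟨heq, ?_⟩
  have hx : r x = l x := (hr x).resolve_right fun h =>
    heq.not_lt (floor_lt_floor_of_add_one_le (h ▸ hxy.le))
  rcases hr y with hy | hy
  · simp [hx, hy, hx ▸ hxy]
  · simp [hx, hy]

theorem blockKey_lt_blockKey (hl : ∀ x, l x ≤ r x) (τ : α → γ) (p : ℤ) {x y : α}
    (hxy : r x < l y) : blockKey l r τ p x < blockKey l r τ p y := by
  have hband : ⌊l x⌋ ≤ ⌊l y⌋ := Int.floor_mono ((hl x).trans hxy.le)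
  simp only [blockKey, Prod.Lex.toLex_lt_toLex]
  have hblock : (⌊l x⌋ + p) / 2 ≤ (⌊l y⌋ + p) / 2 := by omega
  rcases hblock.lt_or_eq with hlt | heq
  · exact Or.inl hlt
  refine Or.inr ⟨heq, Or.inl ?_⟩
  have := hl x
  have := hl y
  split_ifs <;> linarith

theorem blockKey_lt_blockKey_of_floor_eq_add_one (τ : α → γ) {p : ℤ} {x y : α}
    (hp : (⌊l x⌋ + p) % 2 = 0) (hband : ⌊l y⌋ = ⌊l x⌋ + 1) (hyx : l y ≤ r x) :
    blockKey l r τ p y < blockKey l r τ p x := by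
  have hpy : ¬ (⌊l y⌋ + p) % 2 = 0 := by omega
  simp only [blockKey, Prod.Lex.toLex_lt_toLex, if_pos hp, if_neg hpy]
  refine Or.inr ⟨by omega, ?_⟩
  rcases hyx.lt_or_eq with hlt | heq
  · exact Or.inl hlt
  · refine Or.inr ⟨heq, Or.inl ?_⟩
    split_ifs <;> norm_num

theorem bandKey_lt_or_blockKey_lt_of_floor_eq (hr : ∀ x, r x = l x ∨ r x = l x + 1)
    {τ : α → γ} {p : ℤ} {x y : α} (hp : (⌊l x⌋ + p) % 2 = 1) (hband : ⌊l x⌋ = ⌊l y⌋)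
    (hyx : l y ≤ r x) (hxy : l x ≤ r y) (hτ : τ x ≠ τ y) :
    bandKey l r τ y < bandKey l r τ x ∨ blockKey l r τ p y < blockKey l r τ p x := by
  have hpy : (⌊l y⌋ + p) % 2 = 1 := hband ▸ hp
  simp only [bandKey, blockKey, Prod.Lex.toLex_lt_toLex, hband, hpy, lt_self_iff_false, true_and,
    false_or, one_ne_zero, if_false]
  rcases hr x with hx | hx <;> rcases hr y with hy | hy
  · have hl : l y = l x := by linarith
    rcases hτ.lt_or_gt with h | h <;> simp [hx, hy, hl, h]
  · rcases (hx ▸ hyx).lt_or_eq with h | h <;> simp [hx, hy, h]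
  · simp [hx, hy]
  · rcases lt_trichotomy (l x) (l y) with h | h | h
    · simp [hx, hy, h]
    · rcases hτ.lt_or_gt with h' | h' <;> simp [hx, hy, h, h']
    · simp [hx, hy, h]

theorem bandKey_lt_or_blockKey_lt (hr : ∀ x, r x = l x ∨ r x = l x + 1)
    {τ : α → γ} {p : ℤ} {x y : α} (hp : (⌊l y⌋ + p) % 2 = 1) (hband : ⌊l x⌋ ≤ ⌊l y⌋)
    (hyx : l y ≤ r x) (hxy : l x ≤ r y) (hτ : τ x ≠ τ y) :
    bandKey l r τ y < bandKey l r τ x ∨ blockKey l r τ p y < blockKey l r τ p x := by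
  rcases hband.lt_or_eq with hlt | heq
  · have : ⌊l y⌋ ≤ ⌊l x⌋ + 1 :=
      floor_le_floor_add_one (by rcases hr x with h | h <;> linarith)
    exact Or.inr (blockKey_lt_blockKey_of_floor_eq_add_one τ (by omega) (by omega) hyx)
  · exact bandKey_lt_or_blockKey_lt_of_floor_eq hr (heq ▸ hp) heq hyx hxy hτ

theorem bandKey_lt_or_blockKey_lt_or_blockKey_lt (hr : ∀ x, r x = l x ∨ r x = l x + 1)
    {τ : α → γ} {x y : α} (hyx : l y ≤ r x) (hxy : l x ≤ r y) (hτ : τ x ≠ τ y) :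
    bandKey l r τ y < bandKey l r τ x ∨ blockKey l r τ 0 y < blockKey l r τ 0 x ∨
      blockKey l r τ 1 y < blockKey l r τ 1 x := by
  rcases lt_or_ge ⌊l y⌋ ⌊l x⌋ with hlt | hle
  · exact Or.inl (Prod.Lex.toLex_lt_toLex.2 (Or.inl hlt))
  rcases Int.emod_two_eq_zero_or_one ⌊l y⌋ with h | h
  · exact (bandKey_lt_or_blockKey_lt hr (p := 1) (by omega) hle hyx hxy hτ).imp_right Or.inr
  · exact (bandKey_lt_or_blockKey_lt hr (p := 0) (by omega) hle hyx hxy hτ).imp_right Or.inl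

end Keys

theorem stmt_7_general {α : Type*} [PartialOrder α]
    (h : ∃ l r : α → ℝ, (∀ x, r x - l x = 0 ∨ r x - l x = 1) ∧
      ∀ x y : α, x < y ↔ r x < l y) :
    DimLE α 3 := by
  obtain ⟨l, r, hlen, hlt⟩ := h
  have hr : ∀ x, r x = l x ∨ r x = l x + 1 := fun x =>
    (hlen x).imp (fun h => by linarith) (fun h => by linarith)
  have hl : ∀ x, l x ≤ r x := fun x => by rcases hr x with h | h <;> linarith
  let τ := embeddingToCardinal (α := α)
  refine dimLE_three_of_strictMono (bandKey_injective τ.injective)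
    (blockKey_injective τ.injective 0) (blockKey_injective τ.injective 1)
    (fun x y hxy => bandKey_lt_bandKey hr τ ((hlt x y).1 hxy))
    (fun x y hxy => blockKey_lt_blockKey hl τ 0 ((hlt x y).1 hxy))
    (fun x y hxy => blockKey_lt_blockKey hl τ 1 ((hlt x y).1 hxy)) fun x y hxy hyx => ?_
  refine bandKey_lt_or_blockKey_lt_or_blockKey_lt hr ?_ ?_ (τ.injective.ne (ne_of_not_le hxy))
  · exact le_of_not_gt fun h => hxy ((hlt x y).2 h).le
  · exact le_of_not_gt fun h => hyx ((hlt y x).2 h).le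

/-- Every finite interval order representable by closed intervals of length 0 or 1
has dimension at most 3. -/
theorem stmt_7 {α : Type*} [Fintype α] [PartialOrder α]
    (h : ∃ l r : α → ℝ, (∀ x, r x - l x = 0 ∨ r x - l x = 1) ∧
      ∀ x y : α, x < y ↔ r x < l y) :
    DimLE α 3 :=
  stmt_7_general h
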